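/- arXiv:1703.06257 — 9 statements merged into one kernel-verified Lean document; each statement's English description precedes it below -/
import Mathlib

section
/- Work in the polynomial ring ℂ[z₁,z₂] and fix integers K > M ≥ 2 and N ≥ 3. Let F₁ = z₁^M and F₂ = z₂^N + z₂z₁^K. Then the quotient ring ℂ[z₁,z₂]/(F₁,F₂) is spanned as a ℂ-vector space by the images of the MN monomials z₁^k z₂^j with 0 ≤ k ≤ M−1 and 0 ≤ j ≤ N−1; in particular, the dimension of ℂ[z₁,z₂]/(F₁,F₂) as a ℂ-vector space is finite and at most MN. -/
open MvPolynomial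

/-! Since `M ≤ K`, the term `z₂ z₁^K` of `F₂` is a multiple of `F₁`, so `z₂^N ∈ (F₁, F₂)`.
Every monomial `z₁^a z₂^b` with `a ≥ M` or `b ≥ N` therefore vanishes in the quotient, and
the quotient is spanned by the images of the monomials with `a < M` and `b < N`. -/

theorem Ideal.pow_mem_of_add_mul_pow_mem {A : Type*} [CommRing A] {I : Ideal A} {x y : A}
    {M N K : ℕ} (hMK : M ≤ K) (hx : x ^ M ∈ I) (hy : y ^ N + y * x ^ K ∈ I) : y ^ N ∈ I := by
  have hyx : y * x ^ K ∈ I := I.mem_of_dvd (dvd_mul_of_dvd_right (pow_dvd_pow x hMK) y) hx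
  simpa using I.sub_mem hy hyx

section BoxMonomials

variable {R : Type*} [CommRing R] {I : Ideal (MvPolynomial (Fin 2) R)} {M N : ℕ}

theorem mk_X_pow_mul_X_pow_mem_span (h₀ : X 0 ^ M ∈ I) (h₁ : X 1 ^ N ∈ I) (a b : ℕ) :
    Ideal.Quotient.mk I (X 0 ^ a * X 1 ^ b) ∈ Submodule.span R
      (Set.range fun p : Fin M × Fin N =>
        Ideal.Quotient.mk I (X 0 ^ (p.1 : ℕ) * X 1 ^ (p.2 : ℕ))) := by
  by_cases hab : a < M ∧ b < N
  · exact Submodule.subset_span ⟨(⟨a, hab.1⟩, ⟨b, hab.2⟩), rfl⟩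
  · have hmem : X 0 ^ a * X 1 ^ b ∈ I := by
      rcases not_and_or.1 hab with ha | hb
      · exact I.mem_of_dvd (dvd_mul_of_dvd_left (pow_dvd_pow _ (not_lt.1 ha)) _) h₀
      · exact I.mem_of_dvd (dvd_mul_of_dvd_right (pow_dvd_pow _ (not_lt.1 hb)) _) h₁
    rw [Ideal.Quotient.eq_zero_iff_mem.2 hmem]
    exact Submodule.zero_mem _

theorem span_mk_X_pow_mul_X_pow_eq_top (h₀ : X 0 ^ M ∈ I) (h₁ : X 1 ^ N ∈ I) :
    Submodule.span R
      (Set.range fun p : Fin M × Fin N =>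
        Ideal.Quotient.mk I (X 0 ^ (p.1 : ℕ) * X 1 ^ (p.2 : ℕ))) = ⊤ := by
  rw [eq_top_iff]
  rintro x -
  obtain ⟨p, rfl⟩ := Ideal.Quotient.mk_surjective x
  induction p using MvPolynomial.induction_on' with
  | monomial d c =>
    have hmono : (monomial d c : MvPolynomial (Fin 2) R) = C c * (X 0 ^ d 0 * X 1 ^ d 1) := by
      rw [monomial_eq, Finsupp.prod_fintype _ _ (fun _ => pow_zero _), Fin.prod_univ_two]
    rw [hmono, map_mul, ← algebraMap_eq, Ideal.Quotient.mk_algebraMap, ← Algebra.smul_def]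
    exact Submodule.smul_mem _ _ (mk_X_pow_mul_X_pow_mem_span h₀ h₁ _ _)
  | add p q hp hq =>
    rw [map_add]
    exact Submodule.add_mem _ hp hq

end BoxMonomials

theorem catlin_dangelo_multiplicity_le_general
    (M N K : ℕ) (hK : M < K)
    (F₁ F₂ : MvPolynomial (Fin 2) ℂ)
    (hF₁ : F₁ = X 0 ^ M)
    (hF₂ : F₂ = X 1 ^ N + X 1 * X 0 ^ K)
    (I : Ideal (MvPolynomial (Fin 2) ℂ)) (hI : I = Ideal.span {F₁, F₂}) :
    Submodule.span ℂ
        (Set.range fun p : Fin M × Fin N =>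
          Ideal.Quotient.mk I (X 0 ^ (p.1 : ℕ) * X 1 ^ (p.2 : ℕ))) = ⊤ ∧
      Module.Finite ℂ (MvPolynomial (Fin 2) ℂ ⧸ I) ∧
      Module.finrank ℂ (MvPolynomial (Fin 2) ℂ ⧸ I) ≤ M * N := by
  subst hF₁ hF₂ hI
  have h₀ : (X 0 : MvPolynomial (Fin 2) ℂ) ^ M ∈ Ideal.span {X 0 ^ M, X 1 ^ N + X 1 * X 0 ^ K} :=
    Ideal.subset_span (by simp)
  have h₁ := Ideal.pow_mem_of_add_mul_pow_mem (y := X 1) (N := N) hK.le h₀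
    (Ideal.subset_span (by simp))
  have hspan := span_mk_X_pow_mul_X_pow_eq_top h₀ h₁
  refine ⟨hspan, Module.finite_def.2 (Submodule.fg_def.2 ⟨_, Set.finite_range _, hspan⟩), ?_⟩
  simpa using finrank_le_of_span_eq_top hspan

/-- **Multiplicity bound for the Catlin–D'Angelo example (§4.1).**
For `F₁ = z₁^M` and `F₂ = z₂^N + z₂ z₁^K`, the quotient `ℂ[z₁,z₂]/(F₁,F₂)` is spanned
over `ℂ` by the images of the `M·N` monomials `z₁^k z₂^j` (`k < M`, `j < N`); in
particular it is a finite-dimensional `ℂ`-vector space of dimension at most `M·N`. -/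
theorem catlin_dangelo_multiplicity_le
    (M N K : ℕ) (hM : 2 ≤ M) (hN : 3 ≤ N) (hK : M < K)
    (F₁ F₂ : MvPolynomial (Fin 2) ℂ)
    (hF₁ : F₁ = X 0 ^ M)
    (hF₂ : F₂ = X 1 ^ N + X 1 * X 0 ^ K)
    (I : Ideal (MvPolynomial (Fin 2) ℂ)) (hI : I = Ideal.span {F₁, F₂}) :
    Submodule.span ℂ
        (Set.range fun p : Fin M × Fin N =>
          Ideal.Quotient.mk I (X 0 ^ (p.1 : ℕ) * X 1 ^ (p.2 : ℕ))) = ⊤ ∧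
      Module.Finite ℂ (MvPolynomial (Fin 2) ℂ ⧸ I) ∧
      Module.finrank ℂ (MvPolynomial (Fin 2) ℂ ⧸ I) ≤ M * N :=
  catlin_dangelo_multiplicity_le_general M N K hK F₁ F₂ hF₁ hF₂ I hI
end

section
/- Work in the polynomial ring ℂ[z₁,z₂] with integers K > M ≥ 2 and N ≥ 3, F₁ = z₁^M, F₂ = z₂^N + z₂z₁^K, and g = J(F₁,F₂) = MN z₁^{M−1}z₂^{N−1} + M z₁^{K+M−1}. Then (N−1)·g² − J(F₁,g)·(N z₂^N + 2 z₁^K z₂) = (N−1)M² z₁^{2(K+M−1)}, where J(F₁,g) = M²N(N−1) z₁^{2M−2} z₂^{N−2}. In particular, z₁^{2(K+M−1)} belongs to the ideal of ℂ[z₁,z₂] generated by g² and J(F₁,g). -/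
open MvPolynomial

/-- The Jacobian determinant `J(f,h) = (∂f/∂z₁)(∂h/∂z₂) − (∂f/∂z₂)(∂h/∂z₁)`
of two polynomials in `ℂ[z₁,z₂]`. -/
noncomputable def Jac (f h : MvPolynomial (Fin 2) ℂ) : MvPolynomial (Fin 2) ℂ :=
  pderiv 0 f * pderiv 1 h - pderiv 1 f * pderiv 0 h

/-- **The computation of §4.1 of the paper.**  For the Catlin–D'Angelo example
`F₁ = z₁^M`, `F₂ = z₂^N + z₂ z₁^K`, with `g = J(F₁,F₂)` one has
`g = MN z₁^{M−1} z₂^{N−1} + M z₁^{K+M−1}`, `J(F₁,g) = M²N(N−1) z₁^{2M−2} z₂^{N−2}`,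
and `(N−1) g² − J(F₁,g)·(N z₂^N + 2 z₁^K z₂) = (N−1)M² z₁^{2(K+M−1)}`; in particular
`z₁^{2(K+M−1)}` lies in the ideal generated by `g²` and `J(F₁,g)`. -/
theorem catlin_dangelo_g_sq_mod
    (M N K : ℕ) (hM : 2 ≤ M) (hN : 3 ≤ N) (hK : M < K)
    (F₁ F₂ g : MvPolynomial (Fin 2) ℂ)
    (hF₁ : F₁ = X 0 ^ M)
    (hF₂ : F₂ = X 1 ^ N + X 1 * X 0 ^ K)
    (hg : g = Jac F₁ F₂) :
    g = ((M * N : ℕ) : MvPolynomial (Fin 2) ℂ) * X 0 ^ (M - 1) * X 1 ^ (N - 1) +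
          ((M : ℕ) : MvPolynomial (Fin 2) ℂ) * X 0 ^ (K + M - 1) ∧
      Jac F₁ g = ((M ^ 2 * N * (N - 1) : ℕ) : MvPolynomial (Fin 2) ℂ) *
          X 0 ^ (2 * M - 2) * X 1 ^ (N - 2) ∧
      ((N - 1 : ℕ) : MvPolynomial (Fin 2) ℂ) * g ^ 2 -
          Jac F₁ g * (((N : ℕ) : MvPolynomial (Fin 2) ℂ) * X 1 ^ N + 2 * X 0 ^ K * X 1) =
        (((N - 1) * M ^ 2 : ℕ) : MvPolynomial (Fin 2) ℂ) * X 0 ^ (2 * (K + M - 1)) ∧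
      X 0 ^ (2 * (K + M - 1)) ∈ Ideal.span {g ^ 2, Jac F₁ g} := by
  obtain ⟨m, rfl⟩ : ∃ m, M = m + 2 := ⟨M - 2, by omega⟩
  obtain ⟨n, rfl⟩ : ∃ n, N = n + 3 := ⟨N - 3, by omega⟩
  obtain ⟨k, rfl⟩ : ∃ k, K = k + m + 3 := ⟨K - m - 3, by omega⟩
  subst hF₁ hF₂ hg
  have e1 : m + 2 - 1 = m + 1 := by omega
  have e2 : n + 3 - 1 = n + 2 := by omega
  have e3 : k + m + 3 + (m + 2) - 1 = k + 2 * m + 4 := by omega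
  have e4 : 2 * (m + 2) - 2 = 2 * m + 2 := by omega
  have e5 : n + 3 - 2 = n + 1 := by omega
  have hg' : Jac (X 0 ^ (m + 2)) (X 1 ^ (n + 3) + X 1 * X 0 ^ (k + m + 3) :
      MvPolynomial (Fin 2) ℂ) =
      (((m + 2) * (n + 3) : ℕ) : MvPolynomial (Fin 2) ℂ) * X 0 ^ (m + 1) * X 1 ^ (n + 2) +
        ((m + 2 : ℕ) : MvPolynomial (Fin 2) ℂ) * X 0 ^ (k + 2 * m + 4) := by
    simp only [Jac, pderiv_pow, pderiv_X_self, map_add, pderiv_mul]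
    rw [pderiv_X (i := (0 : Fin 2)) (j := (1 : Fin 2))]
    rw [pderiv_X (i := (1 : Fin 2)) (j := (0 : Fin 2))]
    simp only [Pi.single_eq_of_ne (by decide : (1:Fin 2) ≠ 0),
      Pi.single_eq_of_ne (by decide : (0:Fin 2) ≠ 1)]
    push_cast
    ring
  have hJ : Jac (X 0 ^ (m + 2))
      ((((m + 2) * (n + 3) : ℕ) : MvPolynomial (Fin 2) ℂ) * X 0 ^ (m + 1) * X 1 ^ (n + 2) +
        ((m + 2 : ℕ) : MvPolynomial (Fin 2) ℂ) * X 0 ^ (k + 2 * m + 4)) =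
      (((m + 2) ^ 2 * (n + 3) * (n + 2) : ℕ) : MvPolynomial (Fin 2) ℂ) *
        X 0 ^ (2 * m + 2) * X 1 ^ (n + 1) := by
    simp only [← map_natCast (C : ℂ →+* MvPolynomial (Fin 2) ℂ)]
    simp only [Jac, pderiv_pow, pderiv_X_self, map_add, pderiv_mul, pderiv_C]
    simp only [map_natCast]
    rw [pderiv_X (i := (0 : Fin 2)) (j := (1 : Fin 2))]
    rw [pderiv_X (i := (1 : Fin 2)) (j := (0 : Fin 2))]
    simp only [Pi.single_eq_of_ne (by decide : (1:Fin 2) ≠ 0),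
      Pi.single_eq_of_ne (by decide : (0:Fin 2) ≠ 1)]
    push_cast
    ring
  rw [hg', e1, e2, e3, e4, e5, hJ]
  refine ⟨rfl, rfl, ?_, ?_⟩
  · push_cast
    ring
  · have h3 : ((n + 2 : ℕ) : MvPolynomial (Fin 2) ℂ) *
        ((((m + 2) * (n + 3) : ℕ) : MvPolynomial (Fin 2) ℂ) * X 0 ^ (m + 1) * X 1 ^ (n + 2) +
          ((m + 2 : ℕ) : MvPolynomial (Fin 2) ℂ) * X 0 ^ (k + 2 * m + 4)) ^ 2 -
        ((((m + 2) ^ 2 * (n + 3) * (n + 2) : ℕ) : MvPolynomial (Fin 2) ℂ) *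
            X 0 ^ (2 * m + 2) * X 1 ^ (n + 1)) *
          (((n + 3 : ℕ) : MvPolynomial (Fin 2) ℂ) * X 1 ^ (n + 3) +
            2 * X 0 ^ (k + m + 3) * X 1) =
        (((n + 2) * (m + 2) ^ 2 : ℕ) : MvPolynomial (Fin 2) ℂ) *
          X 0 ^ (2 * (k + 2 * m + 4)) := by
      push_cast; ring
    have hc : (((n + 2) * (m + 2) ^ 2 : ℕ) : ℂ) ≠ 0 := Nat.cast_ne_zero.mpr (by positivity)
    rw [Ideal.mem_span_pair]
    refine ⟨C ((((n + 2) * (m + 2) ^ 2 : ℕ) : ℂ)⁻¹) * ((n + 2 : ℕ) : MvPolynomial (Fin 2) ℂ),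
      C ((((n + 2) * (m + 2) ^ 2 : ℕ) : ℂ)⁻¹) *
        -(((n + 3 : ℕ) : MvPolynomial (Fin 2) ℂ) * X 1 ^ (n + 3) +
            2 * X 0 ^ (k + m + 3) * X 1), ?_⟩
    calc C ((((n + 2) * (m + 2) ^ 2 : ℕ) : ℂ)⁻¹) * ((n + 2 : ℕ) : MvPolynomial (Fin 2) ℂ) *
          ((((m + 2) * (n + 3) : ℕ) : MvPolynomial (Fin 2) ℂ) * X 0 ^ (m + 1) * X 1 ^ (n + 2) +
            ((m + 2 : ℕ) : MvPolynomial (Fin 2) ℂ) * X 0 ^ (k + 2 * m + 4)) ^ 2 +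
          C ((((n + 2) * (m + 2) ^ 2 : ℕ) : ℂ)⁻¹) *
            -(((n + 3 : ℕ) : MvPolynomial (Fin 2) ℂ) * X 1 ^ (n + 3) +
                2 * X 0 ^ (k + m + 3) * X 1) *
          ((((m + 2) ^ 2 * (n + 3) * (n + 2) : ℕ) : MvPolynomial (Fin 2) ℂ) *
            X 0 ^ (2 * m + 2) * X 1 ^ (n + 1))
        = C ((((n + 2) * (m + 2) ^ 2 : ℕ) : ℂ)⁻¹) *
            (((n + 2 : ℕ) : MvPolynomial (Fin 2) ℂ) *
              ((((m + 2) * (n + 3) : ℕ) : MvPolynomial (Fin 2) ℂ) * X 0 ^ (m + 1) *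
                  X 1 ^ (n + 2) +
                ((m + 2 : ℕ) : MvPolynomial (Fin 2) ℂ) * X 0 ^ (k + 2 * m + 4)) ^ 2 -
              ((((m + 2) ^ 2 * (n + 3) * (n + 2) : ℕ) : MvPolynomial (Fin 2) ℂ) *
                  X 0 ^ (2 * m + 2) * X 1 ^ (n + 1)) *
                (((n + 3 : ℕ) : MvPolynomial (Fin 2) ℂ) * X 1 ^ (n + 3) +
                  2 * X 0 ^ (k + m + 3) * X 1)) := by ring
      _ = C ((((n + 2) * (m + 2) ^ 2 : ℕ) : ℂ)⁻¹) *
            ((((n + 2) * (m + 2) ^ 2 : ℕ) : MvPolynomial (Fin 2) ℂ) *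
              X 0 ^ (2 * (k + 2 * m + 4))) := by rw [h3]
      _ = X 0 ^ (2 * (k + 2 * m + 4)) := by
            rw [← map_natCast (C : ℂ →+* MvPolynomial (Fin 2) ℂ), ← mul_assoc, ← C_mul,
              inv_mul_cancel₀ hc, C_1, one_mul]
end

section
/- Work in the polynomial ring ℂ[z₁,z₂] with integers K > M ≥ 2 and N ≥ 3, F₁ = z₁^M, F₂ = z₂^N + z₂z₁^K, g = J(F₁,F₂), and let J₁ be the ideal of ℂ[z₁,z₂] generated by g, J(F₁,g), and J(F₂,g). Then the polynomial z₁ belongs to the radical of the ideal J₁. -/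
open MvPolynomial

lemma pdn (i : Fin 2) (c : ℕ) [c.AtLeastTwo] :
    pderiv (R:=ℂ) i (OfNat.ofNat c : MvPolynomial (Fin 2) ℂ) = 0 := by
  have h : (OfNat.ofNat c : MvPolynomial (Fin 2) ℂ) = C ((c:ℕ) : ℂ) := by
    rw [map_natCast (C : ℂ →+* MvPolynomial (Fin 2) ℂ) c]
    norm_cast
  rw [h, pderiv_C]

lemma pd2 (i : Fin 2) : pderiv (R:=ℂ) i (2 : MvPolynomial (Fin 2) ℂ) = 0 := pdn i 2
lemma pd3 (i : Fin 2) : pderiv (R:=ℂ) i (3 : MvPolynomial (Fin 2) ℂ) = 0 := pdn i 3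

lemma jacA (m n k : ℕ) :
    Jac (X 0 ^ (m+2)) (X 1 ^ (n+3) + X 1 * X 0 ^ (m+k+3))
      = C ((m:ℂ)+2) * X 0 ^ (m+1) * (C ((n:ℂ)+3) * X 1 ^ (n+2) + X 0 ^ (m+k+3)) := by
  simp [Jac, pderiv_pow, map_ofNat, map_add, map_natCast, map_mul, pd2, pd3]

lemma jacB (m n k : ℕ) :
    Jac (X 0 ^ (m+2)) (C ((m:ℂ)+2) * X 0 ^ (m+1) * (C ((n:ℂ)+3) * X 1 ^ (n+2) + X 0 ^ (m+k+3)))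
      = C (((m:ℂ)+2)^2*((n:ℂ)+3)*((n:ℂ)+2)) * X 0 ^ (2*m+2) * X 1 ^ (n+1) := by
  simp [Jac, pderiv_pow, map_ofNat, map_add, map_natCast, map_mul, pd2, pd3]
  ring

lemma keylem (m n k : ℕ) :
    (C ((((m:ℂ)+2)^2*((n:ℂ)+2))) : MvPolynomial (Fin 2) ℂ) * X 0 ^ (3*m+k+5)
      = C (((m:ℂ)+2)*((n:ℂ)+2)) * X 0 ^ (m+1) *
          (C ((m:ℂ)+2) * X 0 ^ (m+1) * (C ((n:ℂ)+3) * X 1 ^ (n+2) + X 0 ^ (m+k+3)))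
        - X 1 * (C (((m:ℂ)+2)^2*((n:ℂ)+3)*((n:ℂ)+2)) * X 0 ^ (2*m+2) * X 1 ^ (n+1)) := by
  simp only [map_mul, map_add, map_ofNat, map_pow]
  ring

/-- **§4.1 of the paper.**  For the Catlin–D'Angelo example `F₁ = z₁^M`,
`F₂ = z₂^N + z₂ z₁^K`, `g = J(F₁,F₂)`, and `J₁ = (g, J(F₁,g), J(F₂,g))`,
the polynomial `z₁` belongs to the radical of `J₁`. -/
theorem catlin_dangelo_z1_mem_radical
    (M N K : ℕ) (hM : 2 ≤ M) (hN : 3 ≤ N) (hK : M < K)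
    (F₁ F₂ g : MvPolynomial (Fin 2) ℂ)
    (hF₁ : F₁ = X 0 ^ M)
    (hF₂ : F₂ = X 1 ^ N + X 1 * X 0 ^ K)
    (hg : g = Jac F₁ F₂)
    (J₁ : Ideal (MvPolynomial (Fin 2) ℂ))
    (hJ₁ : J₁ = Ideal.span {g, Jac F₁ g, Jac F₂ g}) :
    X 0 ∈ J₁.radical := by
  obtain ⟨m, rfl⟩ : ∃ m, M = m + 2 := ⟨M - 2, by omega⟩
  obtain ⟨n, rfl⟩ : ∃ n, N = n + 3 := ⟨N - 3, by omega⟩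
  obtain ⟨k, rfl⟩ : ∃ k, K = m + k + 3 := ⟨K - m - 3, by omega⟩
  have hgf : g = C ((m:ℂ)+2) * X 0 ^ (m+1) * (C ((n:ℂ)+3) * X 1 ^ (n+2) + X 0 ^ (m+k+3)) := by
    rw [hg, hF₁, hF₂, jacA]
  have hJf : Jac F₁ g
      = C (((m:ℂ)+2)^2*((n:ℂ)+3)*((n:ℂ)+2)) * X 0 ^ (2*m+2) * X 1 ^ (n+1) := by
    rw [hF₁, hgf, jacB]
  have h1 : ((m:ℂ)+2) ≠ 0 := by
    have h : ((m+2:ℕ):ℂ) ≠ 0 := Nat.cast_ne_zero.mpr (by omega)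
    simpa using h
  have h2 : ((n:ℂ)+2) ≠ 0 := by
    have h : ((n+2:ℕ):ℂ) ≠ 0 := Nat.cast_ne_zero.mpr (by omega)
    simpa using h
  have hc : (((m:ℂ)+2)^2*((n:ℂ)+2)) ≠ 0 := mul_ne_zero (pow_ne_zero 2 h1) h2
  have hgmem : g ∈ J₁ := hJ₁ ▸ Ideal.subset_span (by simp)
  have hjmem : Jac F₁ g ∈ J₁ := hJ₁ ▸ Ideal.subset_span (by simp)
  have eq2 : C ((((m:ℂ)+2)^2*((n:ℂ)+2))) * X 0 ^ (3*m+k+5)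
      = C (((m:ℂ)+2)*((n:ℂ)+2)) * X 0 ^ (m+1) * g - X 1 * Jac F₁ g := by
    rw [hJf, hgf]; exact keylem m n k
  have hmemc : C ((((m:ℂ)+2)^2*((n:ℂ)+2))) * X 0 ^ (3*m+k+5) ∈ J₁ := by
    rw [eq2]
    exact J₁.sub_mem (J₁.mul_mem_left _ hgmem) (J₁.mul_mem_left _ hjmem)
  have eq3 : (X 0 ^ (3*m+k+5) : MvPolynomial (Fin 2) ℂ)
      = C ((((m:ℂ)+2)^2*((n:ℂ)+2))⁻¹) * (C ((((m:ℂ)+2)^2*((n:ℂ)+2))) * X 0 ^ (3*m+k+5)) := by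
    rw [← mul_assoc, ← map_mul, inv_mul_cancel₀ hc, map_one, one_mul]
  have hmem : X 0 ^ (3*m+k+5) ∈ J₁ := by
    rw [eq3]
    exact J₁.mul_mem_left _ hmemc
  exact ⟨3*m+k+5, hmem⟩
end

section
/- Work in the polynomial ring ℂ[z₁,z₂] with integers K > M ≥ 2 and N ≥ 3, F₁ = z₁^M, F₂ = z₂^N + z₂z₁^K, g = J(F₁,F₂), and let J₁ be the ideal of ℂ[z₁,z₂] generated by g, J(F₁,g), and J(F₂,g). Then J₁ is contained in the ideal of ℂ[z₁,z₂] generated by z₁^{M+K−2} and z₂. Consequently, if z₁^m ∈ J₁ for a positive integer m, then m ≥ M+K−2. -/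
open MvPolynomial

private lemma pderiv_two (i : Fin 2) : pderiv i (2 : MvPolynomial (Fin 2) ℂ) = 0 := by
  rw [← map_ofNat (C : ℂ →+* MvPolynomial (Fin 2) ℂ) 2, pderiv_C]

private lemma pderiv_three (i : Fin 2) : pderiv i (3 : MvPolynomial (Fin 2) ℂ) = 0 := by
  rw [← map_ofNat (C : ℂ →+* MvPolynomial (Fin 2) ℂ) 3, pderiv_C]

set_option maxHeartbeats 4000000 in
/-- **§4.1 of the paper.**  For the Catlin–D'Angelo example `F₁ = z₁^M`,
`F₂ = z₂^N + z₂ z₁^K`, `g = J(F₁,F₂)`, the ideal `J₁ = (g, J(F₁,g), J(F₂,g))`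
is contained in the ideal `(z₁^{M+K−2}, z₂)`; consequently, if `z₁^m ∈ J₁` for a
positive integer `m`, then `m ≥ M+K−2`. -/
theorem catlin_dangelo_J1_le_span
    (M N K : ℕ) (hM : 2 ≤ M) (hN : 3 ≤ N) (hK : M < K)
    (F₁ F₂ g : MvPolynomial (Fin 2) ℂ)
    (hF₁ : F₁ = X 0 ^ M)
    (hF₂ : F₂ = X 1 ^ N + X 1 * X 0 ^ K)
    (hg : g = Jac F₁ F₂)
    (J₁ : Ideal (MvPolynomial (Fin 2) ℂ))
    (hJ₁ : J₁ = Ideal.span {g, Jac F₁ g, Jac F₂ g}) :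
    J₁ ≤ Ideal.span {X 0 ^ (M + K - 2), X 1} ∧
      ∀ m : ℕ, 0 < m → X 0 ^ m ∈ J₁ → M + K - 2 ≤ m := by
  obtain ⟨m, rfl⟩ : ∃ m, M = m + 2 := ⟨M - 2, by omega⟩
  obtain ⟨n, rfl⟩ : ∃ n, N = n + 3 := ⟨N - 3, by omega⟩
  obtain ⟨k, rfl⟩ : ∃ k, K = m + k + 3 := ⟨K - m - 3, by omega⟩
  have hc : m + 2 + (m + k + 3) - 2 = 2*m+k+3 := by omega
  rw [hc]
  subst hF₁ hF₂ hg hJ₁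
  have hle : Ideal.span ({Jac (X 0 ^ (m+2)) ((X 1:MvPolynomial (Fin 2) ℂ) ^ (n+3) + X 1 * X 0 ^ (m+k+3)),
      Jac (X 0 ^ (m+2)) (Jac (X 0 ^ (m+2)) ((X 1:MvPolynomial (Fin 2) ℂ) ^ (n+3) + X 1 * X 0 ^ (m+k+3))),
      Jac ((X 1:MvPolynomial (Fin 2) ℂ) ^ (n+3) + X 1 * X 0 ^ (m+k+3))
        (Jac (X 0 ^ (m+2)) ((X 1:MvPolynomial (Fin 2) ℂ) ^ (n+3) + X 1 * X 0 ^ (m+k+3)))} :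
        Set (MvPolynomial (Fin 2) ℂ))
      ≤ Ideal.span {(X 0:MvPolynomial (Fin 2) ℂ) ^ (2*m+k+3), X 1} := by
    rw [Ideal.span_le]
    rintro p (rfl | rfl | rfl)
    · rw [SetLike.mem_coe, Ideal.mem_span_pair]
      exact ⟨((m:MvPolynomial (Fin 2) ℂ)+2) * X 0,
        ((m:MvPolynomial (Fin 2) ℂ)+2) * ((n:MvPolynomial (Fin 2) ℂ)+3) * X 0 ^ (m+1) * X 1 ^ (n+1),
        by simp [Jac, pderiv_pow, pderiv_two, pderiv_three]; ring⟩
    · rw [SetLike.mem_coe, Ideal.mem_span_pair]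
      exact ⟨0,
        ((m:MvPolynomial (Fin 2) ℂ)+2)^2 * ((n:MvPolynomial (Fin 2) ℂ)+3)
          * ((n:MvPolynomial (Fin 2) ℂ)+2) * X 0 ^ (2*m+2) * X 1 ^ n,
        by simp [Jac, pderiv_pow, pderiv_two, pderiv_three]; ring⟩
    · rw [SetLike.mem_coe, Ideal.mem_span_pair]
      refine ⟨-(((m:MvPolynomial (Fin 2) ℂ)+2) * (2*(m:MvPolynomial (Fin 2) ℂ)+(k:MvPolynomial (Fin 2) ℂ)+4) * X 0 ^ (m+k+3)),
        ((m:MvPolynomial (Fin 2) ℂ)+2) * ((m:MvPolynomial (Fin 2) ℂ)+(k:MvPolynomial (Fin 2) ℂ)+3) * ((n:MvPolynomial (Fin 2) ℂ)+3) * ((n:MvPolynomial (Fin 2) ℂ)+2) * X 0 ^ (2*m+k+3) * X 1 ^ (n+1)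
        - ((m:MvPolynomial (Fin 2) ℂ)+2) * ((m:MvPolynomial (Fin 2) ℂ)+1) * ((n:MvPolynomial (Fin 2) ℂ)+3)^2 * X 0 ^ m * X 1 ^ (2*n+3)
        - ((m:MvPolynomial (Fin 2) ℂ)+2) * ((n:MvPolynomial (Fin 2) ℂ)+3) * (2*(m:MvPolynomial (Fin 2) ℂ)+(k:MvPolynomial (Fin 2) ℂ)+4) * X 0 ^ (2*m+k+3) * X 1 ^ (n+1)
        - ((m:MvPolynomial (Fin 2) ℂ)+2) * ((m:MvPolynomial (Fin 2) ℂ)+1) * ((n:MvPolynomial (Fin 2) ℂ)+3) * X 0 ^ (2*m+k+3) * X 1 ^ (n+1), ?_⟩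
      simp [Jac, pderiv_pow, pderiv_two, pderiv_three]; ring
  refine ⟨hle, ?_⟩
  intro m' hpos hmem
  have h1 := hle hmem
  rw [Ideal.mem_span_pair] at h1
  obtain ⟨u, v, huv⟩ := h1
  have h2 := congrArg (aeval ![Polynomial.X, (0:Polynomial ℂ)]) huv
  simp only [map_add, map_mul, map_pow, aeval_X, Matrix.cons_val_zero, Matrix.cons_val_one,
    Matrix.head_cons, mul_zero, add_zero] at h2
  -- h2 : aeval _ u * Polynomial.X ^ (2*m+k+3) = Polynomial.X ^ m'
  by_contra hlt
  push_neg at hlt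
  have hXne : (Polynomial.X : Polynomial ℂ) ^ m' ≠ 0 := pow_ne_zero _ Polynomial.X_ne_zero
  have hu : aeval ![Polynomial.X, (0:Polynomial ℂ)] u ≠ 0 := by
    intro h0
    rw [h0, zero_mul] at h2
    exact hXne h2.symm
  have hdeg := congrArg Polynomial.natDegree h2
  rw [Polynomial.natDegree_mul hu (pow_ne_zero _ Polynomial.X_ne_zero),
    Polynomial.natDegree_X_pow, Polynomial.natDegree_X_pow] at hdeg
  omega
end

section
/- Work in the polynomial ring ℂ[z₁,z₂] with integers K > M ≥ 2 and N ≥ 3, F₁ = z₁^M, F₂ = z₂^N + z₂z₁^K, g = J(F₁,F₂), and let J₁ be the ideal of ℂ[z₁,z₂] generated by g, J(F₁,g), and J(F₂,g). If p is a positive integer such that the p-th power of the radical of J₁ is contained in J₁, then p ≥ M+K−2; in particular p ≥ K. Hence the smallest such p is not bounded by any function of the product MN (since K can be taken arbitrarily large with M, N fixed), which is the ineffectiveness of the full-real-radical Kohn algorithm for the Catlin–D'Angelo example. -/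
open MvPolynomial

/-- **Ineffectiveness of the full-real-radical Kohn algorithm (§4.1).**
For the Catlin–D'Angelo example `F₁ = z₁^M`, `F₂ = z₂^N + z₂ z₁^K`, `g = J(F₁,F₂)`,
and `J₁ = (g, J(F₁,g), J(F₂,g))`: if `p` is a positive integer with
`(radical J₁)^p ⊆ J₁`, then `p ≥ M+K−2`, and in particular `p ≥ K`. -/
theorem catlin_dangelo_ineffectiveness
    (M N K : ℕ) (hM : 2 ≤ M) (hN : 3 ≤ N) (hK : M < K)
    (F₁ F₂ g : MvPolynomial (Fin 2) ℂ)
    (hF₁ : F₁ = X 0 ^ M)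
    (hF₂ : F₂ = X 1 ^ N + X 1 * X 0 ^ K)
    (hg : g = Jac F₁ F₂)
    (J₁ : Ideal (MvPolynomial (Fin 2) ℂ))
    (hJ₁ : J₁ = Ideal.span {g, Jac F₁ g, Jac F₂ g})
    (p : ℕ) (hp : 0 < p) (hpow : J₁.radical ^ p ≤ J₁) :
    M + K - 2 ≤ p ∧ K ≤ p := by
  obtain ⟨m, rfl⟩ : ∃ m, M = m + 2 := ⟨M - 2, by omega⟩
  obtain ⟨n, rfl⟩ : ∃ n, N = n + 3 := ⟨N - 3, by omega⟩
  obtain ⟨k, rfl⟩ : ∃ k, K = m + k + 3 := ⟨K - m - 3, by omega⟩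
  have hm2 : ((m : ℂ) + 2) ≠ 0 := by
    have : ((m + 2 : ℕ) : ℂ) ≠ 0 := Nat.cast_ne_zero.mpr (by omega)
    push_cast at this; exact this
  have hn2 : ((n : ℂ) + 2) ≠ 0 := by
    have : ((n + 2 : ℕ) : ℂ) ≠ 0 := Nat.cast_ne_zero.mpr (by omega)
    push_cast at this; exact this
  have hn3 : ((n : ℂ) + 3) ≠ 0 := by
    have : ((n + 3 : ℕ) : ℂ) ≠ 0 := Nat.cast_ne_zero.mpr (by omega)
    push_cast at this; exact this
  -- explicit form of g
  have hgu : g = C ((m:ℂ)+2) *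
      (X 0 ^ (m+1) * (C ((n:ℂ)+3) * X 1 ^ (n+2) + X 0 ^ (m+k+3))) := by
    rw [hg, hF₁, hF₂]
    simp [Jac, pderiv_mul, pderiv_pow, map_ofNat]
    push_cast
    ring
  -- explicit form of Jac F₁ g
  have hJ1g : Jac F₁ g = C (((m:ℂ)+2)^2 * ((n:ℂ)+3) * ((n:ℂ)+2)) *
      (X 0 ^ (2*m+2) * X 1 ^ (n+1)) := by
    rw [hF₁, hgu]
    simp only [Jac, pderiv_mul, pderiv_pow, pderiv_C_mul, pderiv_C, pderiv_X_self,
      pderiv_X_of_ne (show (0:Fin 2) ≠ 1 by decide), pderiv_X_of_ne (show (1:Fin 2) ≠ 0 by decide),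
      map_add, map_mul, map_zero, map_one, mul_zero, zero_mul, mul_one, one_mul,
      sub_zero, zero_sub, add_zero, zero_add]
    simp only [map_add, map_natCast, map_ofNat, map_mul, map_pow]
    push_cast
    ring
  have hgmem : g ∈ J₁ := by rw [hJ₁]; exact Ideal.subset_span (by simp)
  have hJ1gmem : Jac F₁ g ∈ J₁ := by rw [hJ₁]; exact Ideal.subset_span (by simp)
  have hu : X 0 ^ (m+1) * (C ((n:ℂ)+3) * X 1 ^ (n+2) + X 0 ^ (m+k+3)) ∈ J₁ := by
    have h := Ideal.mul_mem_left J₁ (C (((m:ℂ)+2)⁻¹)) hgmem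
    rwa [hgu, ← mul_assoc, ← C_mul, inv_mul_cancel₀ hm2, C_1, one_mul] at h
  have hv : (X 0 : MvPolynomial (Fin 2) ℂ) ^ (2*m+2) * X 1 ^ (n+1) ∈ J₁ := by
    have h := Ideal.mul_mem_left J₁ (C ((((m:ℂ)+2)^2 * ((n:ℂ)+3) * ((n:ℂ)+2))⁻¹)) hJ1gmem
    rwa [hJ1g, ← mul_assoc, ← C_mul, inv_mul_cancel₀
      (by exact mul_ne_zero (mul_ne_zero (pow_ne_zero _ hm2) hn3) hn2), C_1, one_mul] at h
  -- a power of X 0 lies in J₁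
  have hx : (X 0 : MvPolynomial (Fin 2) ℂ) ^ (3*m+k+5) ∈ J₁ := by
    have key : (X 0 : MvPolynomial (Fin 2) ℂ) ^ (3*m+k+5) =
        X 0 ^ (m+1) * (X 0 ^ (m+1) * (C ((n:ℂ)+3) * X 1 ^ (n+2) + X 0 ^ (m+k+3)))
        - C ((n:ℂ)+3) * X 1 * (X 0 ^ (2*m+2) * X 1 ^ (n+1)) := by ring
    rw [key]
    exact sub_mem (Ideal.mul_mem_left _ _ hu) (Ideal.mul_mem_left _ _ hv)
  have hxrad : (X 0 : MvPolynomial (Fin 2) ℂ) ∈ J₁.radical := ⟨3*m+k+5, hx⟩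
  have hxp : (X 0 : MvPolynomial (Fin 2) ℂ) ^ p ∈ J₁ := hpow (Ideal.pow_mem_pow hxrad p)
  -- specialize z₂ = 0
  set φ : MvPolynomial (Fin 2) ℂ →ₐ[ℂ] Polynomial ℂ := aeval ![Polynomial.X, 0] with hφ
  have hφ0 : φ (X 0) = Polynomial.X := by simp [hφ]
  have hφ1 : φ (X 1) = 0 := by simp [hφ]
  have hpd0F₂ : pderiv 0 F₂ = C (((m:ℂ)+(k:ℂ)+3)) * X 1 * X 0 ^ (m+k+2) := by
    rw [hF₂]; simp [pderiv_mul, pderiv_pow, map_ofNat]; ring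
  have hpd1F₂ : pderiv 1 F₂ = C ((n:ℂ)+3) * X 1 ^ (n+2) + X 0 ^ (m+k+3) := by
    rw [hF₂]; simp [pderiv_mul, pderiv_pow, map_ofNat]
  have hpd0g : pderiv 0 g =
      C (((m:ℂ)+2)*((m:ℂ)+1)*((n:ℂ)+3)) * X 0 ^ m * X 1 ^ (n+2)
      + C (((m:ℂ)+2)*(2*(m:ℂ)+(k:ℂ)+4)) * X 0 ^ (2*m+k+3) := by
    rw [hgu]
    simp only [pderiv_mul, pderiv_pow, pderiv_C_mul, pderiv_C, pderiv_X_self,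
      pderiv_X_of_ne (show (1:Fin 2) ≠ 0 by decide), pderiv_X_of_ne (show (0:Fin 2) ≠ 1 by decide),
      map_add, map_mul, map_zero, map_one, mul_zero, zero_mul, mul_one, one_mul,
      sub_zero, zero_sub, add_zero, zero_add]
    simp only [map_add, map_natCast, map_ofNat, map_mul, map_pow]
    push_cast
    ring
  have hφg : φ g = Polynomial.C ((m:ℂ)+2) * Polynomial.X ^ (2*m+k+4) := by
    rw [hgu]; simp [hφ]
    refine Or.inl ?_
    rw [← pow_add]; congr 1; omega
  have hφJ1g : φ (Jac F₁ g) = 0 := by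
    rw [hJ1g]; simp [hφ]
  have hφJ2g : φ (Jac F₂ g) =
      -(Polynomial.C (((m:ℂ)+2)*(2*(m:ℂ)+(k:ℂ)+4)) * Polynomial.X ^ (3*m+2*k+6)) := by
    rw [show Jac F₂ g = pderiv 0 F₂ * pderiv 1 g - pderiv 1 F₂ * pderiv 0 g from rfl]
    rw [map_sub, map_mul, map_mul, hpd0F₂, hpd1F₂, hpd0g]
    simp [hφ]
    try ring_nf
    try tauto
  have hmap : Ideal.map φ J₁ ≤ Ideal.span {(Polynomial.X : Polynomial ℂ) ^ (2*m+k+4)} := by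
    rw [hJ₁, Ideal.map_span, Ideal.span_le]
    rintro q hq
    simp only [Set.image_insert_eq, Set.image_singleton, Set.mem_insert_iff,
      Set.mem_singleton_iff] at hq
    rcases hq with rfl | rfl | rfl
    · rw [hφg]
      exact Ideal.mem_span_singleton.mpr (dvd_mul_left _ _)
    · rw [hφJ1g]; exact zero_mem _
    · rw [hφJ2g]
      exact Ideal.mem_span_singleton.mpr
        ((dvd_neg).mpr ((pow_dvd_pow _ (by omega)).mul_left _))
  have hXp : (Polynomial.X : Polynomial ℂ) ^ p ∈
      Ideal.span {(Polynomial.X : Polynomial ℂ) ^ (2*m+k+4)} := by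
    have h := Ideal.mem_map_of_mem φ hxp
    rw [map_pow, hφ0] at h
    exact hmap h
  have hdvd : (Polynomial.X : Polynomial ℂ) ^ (2*m+k+4) ∣ Polynomial.X ^ p :=
    Ideal.mem_span_singleton.mp hXp
  have hdeg := Polynomial.natDegree_le_of_dvd hdvd (pow_ne_zero p Polynomial.X_ne_zero)
  simp only [Polynomial.natDegree_X_pow] at hdeg
  constructor <;> omega
end

section
/- Work in the polynomial ring ℂ[z₁,z₂] with integers K > M and N ≥ 3, and assume M ≥ 3. Let F₁ = z₁^M, F₂ = z₂^N + z₂z₁^K, g = J(F₁,F₂), and let J₁ be the ideal of ℂ[z₁,z₂] generated by g, J(F₁,g), and J(F₂,g). Then J₁ is contained in the principal ideal generated by z₁, and the radical of J₁ equals the principal prime ideal (z₁). -/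
/-!
Since `M ≥ 3`, `g = M z₁^(M-1) (N z₂^(N-1) + z₁^K)` is divisible by `z₁²`, so every partial
derivative of `g`, hence every Jacobian `J(f, g)`, is divisible by `z₁`. Conversely
`J(F₁, g) = M² N (N-1) z₁^(2M-2) z₂^(N-2)`, and eliminating the `z₂^(N-1)` term gives
`M (N-1) z₁^(M-1) g - z₂ J(F₁, g) = M² (N-1) z₁^(2M-2+K)`, a nonzero multiple of a power
of `z₁`. As `(z₁)` is prime, it is therefore the radical of `J₁`.
-/

open MvPolynomial

theorem Derivation.dvd_map_of_sq_dvd {R A : Type*} [CommSemiring R] [CommSemiring A]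
    [Algebra R A] (D : Derivation R A A) {a p : A} (h : a ^ 2 ∣ p) : a ∣ D p := by
  obtain ⟨q, rfl⟩ := h
  rw [D.leibniz, D.leibniz_pow, smul_eq_mul, smul_eq_mul, smul_eq_mul]
  exact dvd_add (Dvd.intro (a * D q) (by ring)) (Dvd.intro (q * (2 • D a)) (by ring))

theorem Ideal.radical_eq_span_singleton_of_le_of_pow_mem {R : Type*} [CommSemiring R]
    {I : Ideal R} {x : R} (hx : (Ideal.span {x}).IsPrime) (hI : I ≤ Ideal.span {x}) {n : ℕ}
    (hn : x ^ n ∈ I) :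
    I.radical = Ideal.span {x} :=
  le_antisymm (hx.radical_le_iff.2 hI)
    (Ideal.span_le.2 (Set.singleton_subset_iff.2 ⟨n, hn⟩))

theorem dvd_jac_of_sq_dvd {a : MvPolynomial (Fin 2) ℂ} (f : MvPolynomial (Fin 2) ℂ)
    {g : MvPolynomial (Fin 2) ℂ} (h : a ^ 2 ∣ g) : a ∣ Jac f g :=
  dvd_sub (dvd_mul_of_dvd_right ((pderiv 1).dvd_map_of_sq_dvd h) _)
    (dvd_mul_of_dvd_right ((pderiv 0).dvd_map_of_sq_dvd h) _)

theorem jac_X_zero_pow_left (M : ℕ) (g : MvPolynomial (Fin 2) ℂ) :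
    Jac (X 0 ^ M) g = (M : MvPolynomial (Fin 2) ℂ) * X 0 ^ (M - 1) * pderiv 1 g := by
  simp [Jac]

theorem jac_X_zero_pow_X_one_pow_add (M N K : ℕ) :
    Jac (X 0 ^ M) (X 1 ^ N + X 1 * X 0 ^ K) =
      (M : MvPolynomial (Fin 2) ℂ) * X 0 ^ (M - 1) *
        ((N : MvPolynomial (Fin 2) ℂ) * X 1 ^ (N - 1) + X 0 ^ K) := by
  simp [jac_X_zero_pow_left]

theorem X_zero_pow_mem_span_jac (M N K : ℕ) (hM : 1 ≤ M) (hN : 2 ≤ N)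
    {g : MvPolynomial (Fin 2) ℂ} (hg : g = Jac (X 0 ^ M) (X 1 ^ N + X 1 * X 0 ^ K)) :
    X 0 ^ (2 * (M - 1) + K) ∈ Ideal.span {g, Jac (X 0 ^ M) g} := by
  obtain ⟨m, rfl⟩ := Nat.exists_eq_add_of_le' hM
  obtain ⟨n, rfl⟩ := Nat.exists_eq_add_of_le' hN
  rw [jac_X_zero_pow_X_one_pow_add] at hg
  have hJ : Jac (X 0 ^ (m + 1)) g =
      (((m + 1) ^ 2 * (n + 2) * (n + 1) : ℕ) : MvPolynomial (Fin 2) ℂ) *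
        X 0 ^ (2 * m) * X 1 ^ n := by
    rw [jac_X_zero_pow_left, hg]
    simp only [add_tsub_cancel_right, Nat.add_one_sub_one, Derivation.leibniz, map_add,
      Derivation.leibniz_pow, pderiv_X, Pi.single_eq_same, Pi.single_eq_of_ne zero_ne_one,
      Derivation.map_natCast, smul_eq_mul, nsmul_eq_mul]
    push_cast
    ring
  have hc : IsUnit (C (((m + 1) ^ 2 * (n + 1) : ℕ) : ℂ) : MvPolynomial (Fin 2) ℂ) :=
    (IsUnit.mk0 _ (Nat.cast_ne_zero.2 (by positivity))).map C
  have helim : X 0 ^ (2 * (m + 1 - 1) + K) * C (((m + 1) ^ 2 * (n + 1) : ℕ) : ℂ) =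
      (((m + 1) * (n + 1) : ℕ) : MvPolynomial (Fin 2) ℂ) * X 0 ^ m * g -
        X 1 * Jac (X 0 ^ (m + 1)) g := by
    rw [hJ, hg, map_natCast]
    push_cast
    ring
  rw [← Ideal.mul_unit_mem_iff_mem _ hc, helim]
  exact Ideal.sub_mem _ (Ideal.mul_mem_left _ _ (Ideal.subset_span (by simp)))
    (Ideal.mul_mem_left _ _ (Ideal.subset_span (by simp)))

theorem catlin_dangelo_radical_J1_eq_general
    (M N K : ℕ) (hM : 3 ≤ M) (hN : 3 ≤ N)
    (F₁ F₂ g : MvPolynomial (Fin 2) ℂ)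
    (hF₁ : F₁ = X 0 ^ M)
    (hF₂ : F₂ = X 1 ^ N + X 1 * X 0 ^ K)
    (hg : g = Jac F₁ F₂)
    (J₁ : Ideal (MvPolynomial (Fin 2) ℂ))
    (hJ₁ : J₁ = Ideal.span {g, Jac F₁ g, Jac F₂ g}) :
    J₁ ≤ Ideal.span {X 0} ∧ J₁.radical = Ideal.span {X 0} := by
  subst hF₁ hF₂
  have hsq : X 0 ^ 2 ∣ g := by
    rw [hg, jac_X_zero_pow_X_one_pow_add]
    exact dvd_mul_of_dvd_left (dvd_mul_of_dvd_right (pow_dvd_pow _ (by omega)) _) _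
  have hle : J₁ ≤ Ideal.span {X 0} := by
    simp only [hJ₁, Ideal.span_le, Set.insert_subset_iff, Set.singleton_subset_iff,
      SetLike.mem_coe, Ideal.mem_span_singleton]
    exact ⟨(dvd_pow_self _ two_ne_zero).trans hsq, dvd_jac_of_sq_dvd _ hsq,
      dvd_jac_of_sq_dvd _ hsq⟩
  have hpow : X 0 ^ (2 * (M - 1) + K) ∈ J₁ := by
    rw [hJ₁]
    refine Ideal.span_mono ?_ (X_zero_pow_mem_span_jac M N K (by omega) (by omega) hg)
    exact Set.insert_subset_insert (Set.singleton_subset_iff.2 (Set.mem_insert _ _))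
  have hprime : (Ideal.span {X 0} : Ideal (MvPolynomial (Fin 2) ℂ)).IsPrime :=
    (Ideal.span_singleton_prime (X_ne_zero _)).2 X_prime
  exact ⟨hle, Ideal.radical_eq_span_singleton_of_le_of_pow_mem hprime hle hpow⟩

/-- **§4.2 of the paper.**  For the Catlin–D'Angelo example `F₁ = z₁^M`,
`F₂ = z₂^N + z₂ z₁^K` with `K > M ≥ 3` and `N ≥ 3`, the ideal
`J₁ = (g, J(F₁,g), J(F₂,g))` (with `g = J(F₁,F₂)`) is contained in the principal
ideal `(z₁)`, and the radical of `J₁` equals `(z₁)`. -/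
theorem catlin_dangelo_radical_J1_eq
    (M N K : ℕ) (hM : 3 ≤ M) (hN : 3 ≤ N) (hK : M < K)
    (F₁ F₂ g : MvPolynomial (Fin 2) ℂ)
    (hF₁ : F₁ = X 0 ^ M)
    (hF₂ : F₂ = X 1 ^ N + X 1 * X 0 ^ K)
    (hg : g = Jac F₁ F₂)
    (J₁ : Ideal (MvPolynomial (Fin 2) ℂ))
    (hJ₁ : J₁ = Ideal.span {g, Jac F₁ g, Jac F₂ g}) :
    J₁ ≤ Ideal.span {X 0} ∧ J₁.radical = Ideal.span {X 0} :=
  catlin_dangelo_radical_J1_eq_general M N K hM hN F₁ F₂ g hF₁ hF₂ hg J₁ hJ₁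
end

section
/- Work in the polynomial ring ℂ[z₁,z₂] with integers K > M ≥ 2 and N ≥ 3, F₁ = z₁^M, F₂ = z₂^N + z₂z₁^K. Define the sequence of polynomials G₀ = J(F₁,F₂) and G_{j+1} = J(F₁,G_j) for j ≥ 0. Then for every integer j with 1 ≤ j ≤ N−1, G_j = M^{j+1} · (N!/(N−1−j)!) · z₁^{(j+1)(M−1)} · z₂^{N−1−j}. In particular G_{N−1} = M^N · N! · z₁^{N(M−1)}, so z₁^{N(M−1)} belongs to the ideal generated by the iterated Jacobian determinants G₀, G₁, …, G_{N−1}; thus z₁ is obtained from this ideal by a root-taking of effective order N(M−1) < MN. -/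
open MvPolynomial

/-- The iterated Jacobian determinants of the Catlin–D'Angelo example:
`G₀ = J(z₁^M, z₂^N + z₂ z₁^K)` and `G_{j+1} = J(z₁^M, G_j)`. -/
noncomputable def iterJac (M N K : ℕ) : ℕ → MvPolynomial (Fin 2) ℂ
  | 0 => Jac (X 0 ^ M) (X 1 ^ N + X 1 * X 0 ^ K)
  | j + 1 => Jac (X 0 ^ M) (iterJac M N K j)

/-!
Since `z₁^M` does not involve `z₂`, `J(z₁^M, h) = M z₁^(M-1) ∂h/∂z₂`, and the factor
`M z₁^(M-1)` is a constant for `∂/∂z₂`; hence `G_j = (M z₁^(M-1))^(j+1) ∂^(j+1) F₂/∂z₂^(j+1)`.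
The term `z₂ z₁^K` of `F₂` is killed by two derivatives in `z₂`, which is why `K` drops out,
and `∂^(j+1)(z₂^N)/∂z₂^(j+1) = N!/(N-1-j)! z₂^(N-1-j)`. At `j = N-1` the coefficient
`M^N N!` is a unit of `ℂ`, so `z₁^(N(M-1))` lies in the ideal.
-/

namespace MvPolynomial

variable {σ R : Type*} [CommSemiring R]

theorem pderiv_mul_of_pderiv_eq_zero {i : σ} {c : MvPolynomial σ R} (hc : pderiv i c = 0)
    (p : MvPolynomial σ R) : pderiv i (c * p) = c * pderiv i p := by
  rw [pderiv_mul, hc, zero_mul, zero_add]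

theorem iterate_pderiv_X_pow_mul {i : σ} {q : MvPolynomial σ R} (hq : pderiv i q = 0)
    (m n : ℕ) :
    (pderiv i)^[n] (X i ^ m * q) = (m.descFactorial n : MvPolynomial σ R) * X i ^ (m - n) * q := by
  induction n with
  | zero => simp
  | succ n ih =>
    rw [Function.iterate_succ_apply', ih, mul_comm, pderiv_mul_of_pderiv_eq_zero hq,
      pderiv_mul_of_pderiv_eq_zero ((pderiv i).map_natCast _), pderiv_pow, pderiv_X_self,
      Nat.descFactorial_succ, Nat.sub_sub]
    push_cast
    ring

theorem iterate_pderiv_X_pow_add_X_mul_X_pow {i j : σ} (hij : j ≠ i) (N K n : ℕ) (hn : 2 ≤ n) :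
    (pderiv i)^[n] (X i ^ N + X i * X j ^ K : MvPolynomial σ R) =
      (N.descFactorial n : MvPolynomial σ R) * X i ^ (N - n) := by
  have hone : pderiv i (1 : MvPolynomial σ R) = 0 := (pderiv i).map_one_eq_zero
  have hXj : pderiv i (X j ^ K : MvPolynomial σ R) = 0 := by simp [hij]
  have hmain := iterate_pderiv_X_pow_mul hone N n
  have hvanish := iterate_pderiv_X_pow_mul hXj 1 n
  rw [mul_one, mul_one] at hmain
  rw [pow_one, Nat.descFactorial_eq_zero_iff_lt.mpr (by omega), Nat.cast_zero, zero_mul,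
    zero_mul] at hvanish
  rw [iterate_map_add, hmain, hvanish, add_zero]

end MvPolynomial

theorem Jac_X_zero_pow (M : ℕ) (h : MvPolynomial (Fin 2) ℂ) :
    Jac (X 0 ^ M) h = (M : MvPolynomial (Fin 2) ℂ) * X 0 ^ (M - 1) * pderiv 1 h := by
  simp [Jac]

theorem iterJac_eq_iterate_pderiv (M N K j : ℕ) :
    iterJac M N K j =
      ((M : MvPolynomial (Fin 2) ℂ) * X 0 ^ (M - 1)) ^ (j + 1) *
        (pderiv 1)^[j + 1] (X 1 ^ N + X 1 * X 0 ^ K) := by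
  have hc : pderiv 1 ((M : MvPolynomial (Fin 2) ℂ) * X 0 ^ (M - 1)) = 0 := by simp
  induction j with
  | zero => rw [iterJac, Jac_X_zero_pow, zero_add, pow_one, Function.iterate_one]
  | succ j ih =>
    rw [iterJac, Jac_X_zero_pow, ih, pderiv_mul_of_pderiv_eq_zero (by simp [hc]),
      Function.iterate_succ_apply' _ (j + 1)]
    ring

theorem iterJac_eq_monomial (M N K j : ℕ) (hj : 1 ≤ j) :
    iterJac M N K j =
      ((M ^ (j + 1) * N.descFactorial (j + 1) : ℕ) : MvPolynomial (Fin 2) ℂ) *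
        X 0 ^ ((j + 1) * (M - 1)) * X 1 ^ (N - (j + 1)) := by
  rw [iterJac_eq_iterate_pderiv,
    iterate_pderiv_X_pow_add_X_mul_X_pow (by decide) N K (j + 1) (by omega)]
  push_cast
  ring

theorem iterJac_eq_factorial_div_mul (M N K j : ℕ) (hj : 1 ≤ j) (hjN : j + 1 ≤ N) :
    iterJac M N K j =
      ((M ^ (j + 1) * (Nat.factorial N / Nat.factorial (N - 1 - j)) : ℕ) :
          MvPolynomial (Fin 2) ℂ) *
        X 0 ^ ((j + 1) * (M - 1)) * X 1 ^ (N - 1 - j) := by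
  rw [iterJac_eq_monomial M N K j hj, Nat.descFactorial_eq_div hjN,
    show N - (j + 1) = N - 1 - j by omega]

theorem catlin_dangelo_effective_chain_general
    (M N K : ℕ) (hM : 2 ≤ M) (hN : 3 ≤ N) :
    (∀ j : ℕ, 1 ≤ j → j ≤ N - 1 →
        iterJac M N K j =
          ((M ^ (j + 1) * (Nat.factorial N / Nat.factorial (N - 1 - j)) : ℕ) :
              MvPolynomial (Fin 2) ℂ) *
            X 0 ^ ((j + 1) * (M - 1)) * X 1 ^ (N - 1 - j)) ∧
      iterJac M N K (N - 1) =
        ((M ^ N * Nat.factorial N : ℕ) : MvPolynomial (Fin 2) ℂ) *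
          X 0 ^ (N * (M - 1)) ∧
      X 0 ^ (N * (M - 1)) ∈
        Ideal.span (Set.range fun j : Fin N => iterJac M N K (j : ℕ)) ∧
      N * (M - 1) < M * N := by
  have chain := fun j (hj : 1 ≤ j) (hjN : j ≤ N - 1) ↦
    iterJac_eq_factorial_div_mul M N K j hj (by omega)
  have last := chain (N - 1) (by omega) le_rfl
  rw [Nat.sub_add_cancel (by omega), Nat.sub_self, Nat.factorial_zero,
    Nat.div_one, pow_zero, mul_one] at last
  refine ⟨chain, last, ?_, ?_⟩
  · have hunit : IsUnit ((M ^ N * Nat.factorial N : ℕ) : MvPolynomial (Fin 2) ℂ) := by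
      rw [← map_natCast C]
      exact (isUnit_iff_ne_zero.mpr (Nat.cast_ne_zero.mpr
        (Nat.mul_ne_zero (pow_ne_zero _ (by omega)) N.factorial_ne_zero))).map C
    rw [← Ideal.unit_mul_mem_iff_mem _ hunit, ← last]
    exact Ideal.subset_span ⟨⟨N - 1, by omega⟩, rfl⟩
  · rw [mul_comm M]
    exact Nat.mul_lt_mul_of_pos_left (by omega) (by omega)

/-- **The effective Kohn algorithm for the Catlin–D'Angelo example (§4.3).**
With `G₀ = J(F₁,F₂)`, `G_{j+1} = J(F₁,G_j)`, one has
`G_j = M^{j+1}·(N!/(N−1−j)!)·z₁^{(j+1)(M−1)}·z₂^{N−1−j}` for `1 ≤ j ≤ N−1`; in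
particular `G_{N−1} = M^N·N!·z₁^{N(M−1)}`, so `z₁^{N(M−1)}` lies in the ideal
generated by `G₀,…,G_{N−1}`, and the root order `N(M−1)` is `< MN`. -/
theorem catlin_dangelo_effective_chain
    (M N K : ℕ) (hM : 2 ≤ M) (hN : 3 ≤ N) (hK : M < K) :
    (∀ j : ℕ, 1 ≤ j → j ≤ N - 1 →
        iterJac M N K j =
          ((M ^ (j + 1) * (Nat.factorial N / Nat.factorial (N - 1 - j)) : ℕ) :
              MvPolynomial (Fin 2) ℂ) *
            X 0 ^ ((j + 1) * (M - 1)) * X 1 ^ (N - 1 - j)) ∧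
      iterJac M N K (N - 1) =
        ((M ^ N * Nat.factorial N : ℕ) : MvPolynomial (Fin 2) ℂ) *
          X 0 ^ (N * (M - 1)) ∧
      X 0 ^ (N * (M - 1)) ∈
        Ideal.span (Set.range fun j : Fin N => iterJac M N K (j : ℕ)) ∧
      N * (M - 1) < M * N :=
  catlin_dangelo_effective_chain_general M N K hM hN
end

section
/- Let U be an open subset of ℂⁿ and let g₁, …, gₙ be functions holomorphic on U. Let a = (a_{ℓk})_{1≤ℓ,k≤n} be the matrix of functions a_{ℓk} = ∂_k g_ℓ (so each row of a is the holomorphic gradient of one of the gⱼ). Define b_ν = Σ_{p,ℓ=1}^{n} adj(a)_{pℓ} · ∂_p a_{ℓν} for 1 ≤ ν ≤ n. Then b_ν = ∂_ν(det a) on U for every ν; that is, when every row of the matrix is the differential of a holomorphic function, the vector produced by the new procedure of Theorem (6.2) coincides exactly with the gradient of the determinant produced by the old procedure. -/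
/-! By Jacobi's formula, `∂_ν (det a) = Σ_{p,ℓ} adj(a)_{pℓ} ∂_ν a_{ℓp}`. Since `a_{ℓp} = ∂_p g_ℓ`,
symmetry of second derivatives of the analytic `g_ℓ` gives `∂_ν a_{ℓp} = ∂_p a_{ℓν}`. -/

namespace Matrix

variable {ι R : Type*} [Fintype ι] [DecidableEq ι] [CommRing R]

theorem trace_adjugate_mul (M C : Matrix ι ι R) :
    (adjugate M * C).trace = ∑ p, (M.updateCol p fun ℓ => C ℓ p).det := by
  refine Finset.sum_congr rfl fun p _ => ?_
  rw [← cramer_apply, cramer_eq_adjugate_mulVec]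
  rfl

theorem det_updateCol_eq_sum_perm (M : Matrix ι ι R) (p : ι) (b : ι → R) :
    (M.updateCol p b).det =
      ∑ σ : Equiv.Perm ι,
        Equiv.Perm.sign σ • (b (σ p) * ∏ j ∈ Finset.univ.erase p, M (σ j) j) := by
  rw [det_apply]
  refine Finset.sum_congr rfl fun σ _ => ?_
  rw [← Finset.mul_prod_erase _ _ (Finset.mem_univ p), updateCol_self]
  congr 2
  refine Finset.prod_congr rfl fun j hj => ?_
  rw [updateCol_ne (Finset.ne_of_mem_erase hj)]

theorem trace_adjugate_mul_eq_sum_perm (M C : Matrix ι ι R) :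
    (adjugate M * C).trace =
      ∑ σ : Equiv.Perm ι,
        Equiv.Perm.sign σ • ∑ i, C (σ i) i * ∏ j ∈ Finset.univ.erase i, M (σ j) j := by
  simp only [trace_adjugate_mul, det_updateCol_eq_sum_perm, Finset.smul_sum]
  exact Finset.sum_comm

end Matrix

section Jacobi

variable {ι 𝕜 E : Type*} [Fintype ι] [DecidableEq ι] [NontriviallyNormedField 𝕜]
  [NormedAddCommGroup E] [NormedSpace 𝕜 E]

theorem HasFDerivAt.matrix_det {A : ι → ι → E → 𝕜} {A' : ι → ι → E →L[𝕜] 𝕜} {z : E}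
    (hA : ∀ i j, HasFDerivAt (A i j) (A' i j) z) :
    HasFDerivAt (fun w => (Matrix.of fun i j => A i j w).det)
      (∑ p, ∑ ℓ, Matrix.adjugate (Matrix.of fun i j => A i j z) p ℓ • A' ℓ p) z := by
  have hleibniz : HasFDerivAt (fun w => (Matrix.of fun i j => A i j w).det)
      (∑ σ : Equiv.Perm ι, Equiv.Perm.sign σ •
        ∑ i, (∏ j ∈ Finset.univ.erase i, A (σ j) j z) • A' (σ i) i) z := by
    simp only [Matrix.det_apply, Matrix.of_apply]
    exact HasFDerivAt.fun_sum fun σ _ =>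
      (HasFDerivAt.finsetProd fun i _ => hA (σ i) i).const_smul _
  convert hleibniz using 1
  ext v
  simpa [Matrix.trace, Matrix.mul_apply, mul_comm] using
    Matrix.trace_adjugate_mul_eq_sum_perm (Matrix.of fun i j => A i j z)
      (Matrix.of fun i j => A' i j v)

end Jacobi

section SecondDerivative

variable {𝕜 E F : Type*} [NontriviallyNormedField 𝕜] [NormedAddCommGroup E] [NormedSpace 𝕜 E]
  [NormedAddCommGroup F] [NormedSpace 𝕜 F] [CompleteSpace F]

theorem AnalyticAt.fderiv_fderiv_apply_comm {g : E → F} {z : E} (hg : AnalyticAt 𝕜 g z)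
    (u v : E) :
    fderiv 𝕜 (fun w => fderiv 𝕜 g w u) z v = fderiv 𝕜 (fun w => fderiv 𝕜 g w v) z u := by
  have hd : DifferentiableAt 𝕜 (fderiv 𝕜 g) z := hg.fderiv.differentiableAt
  simp only [fderiv_clm_apply hd (differentiableAt_const _)]
  simpa using hg.contDiffAt.isSymmSndFDerivAt_of_omega v u

end SecondDerivative

theorem new_procedure_eq_gradient_det_of_rows_gradients_general
    (n : ℕ) (U : Set (Fin n → ℂ))
    (g : Fin n → (Fin n → ℂ) → ℂ)
    (hg : ∀ ℓ, AnalyticOnNhd ℂ (g ℓ) U)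
    (a : Fin n → Fin n → (Fin n → ℂ) → ℂ)
    (ha : ∀ ℓ k, a ℓ k = fun w => fderiv ℂ (g ℓ) w (Pi.single k 1))
    (z : Fin n → ℂ) (hz : z ∈ U) (ν : Fin n) :
    ∑ p : Fin n, ∑ ℓ : Fin n,
        (Matrix.adjugate (Matrix.of fun j k => a j k z)) p ℓ *
          fderiv ℂ (a ℓ ν) z (Pi.single p 1) =
      fderiv ℂ (fun w => (Matrix.of fun j k => a j k w).det) z (Pi.single ν 1) := by
  have hga : ∀ ℓ, AnalyticAt ℂ (g ℓ) z := fun ℓ => hg ℓ z hz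
  obtain rfl : a = fun ℓ k w => fderiv ℂ (g ℓ) w (Pi.single k 1) := funext fun ℓ => funext (ha ℓ)
  have hda : ∀ ℓ k, DifferentiableAt ℂ (fun w => fderiv ℂ (g ℓ) w (Pi.single k 1)) z :=
    fun ℓ k => (hga ℓ).fderiv.differentiableAt.clm_apply (differentiableAt_const _)
  rw [(HasFDerivAt.matrix_det fun ℓ k => (hda ℓ k).hasFDerivAt).fderiv]
  simp only [sum_apply, smul_apply, smul_eq_mul]
  refine Finset.sum_congr rfl fun p _ => Finset.sum_congr rfl fun ℓ _ => ?_
  rw [(hga ℓ).fderiv_fderiv_apply_comm]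

/-- **§6.3 / Theorem (6.2) of the paper, gradient-rows case.**
If every row of the matrix `a` is the holomorphic gradient of a holomorphic function
(`a_{ℓk} = ∂_k g_ℓ`) on an open `U ⊆ ℂⁿ`, then the vector
`b_ν = Σ_{p,ℓ} adj(a)_{pℓ} ∂_p a_{ℓν}` produced by the new procedure coincides with
`∂_ν (det a)`, the gradient of the determinant produced by the old procedure. -/
theorem new_procedure_eq_gradient_det_of_rows_gradients
    (n : ℕ) (U : Set (Fin n → ℂ)) (hU : IsOpen U)
    (g : Fin n → (Fin n → ℂ) → ℂ)
    (hg : ∀ ℓ, AnalyticOnNhd ℂ (g ℓ) U)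
    (a : Fin n → Fin n → (Fin n → ℂ) → ℂ)
    (ha : ∀ ℓ k, a ℓ k = fun w => fderiv ℂ (g ℓ) w (Pi.single k 1))
    (z : Fin n → ℂ) (hz : z ∈ U) (ν : Fin n) :
    ∑ p : Fin n, ∑ ℓ : Fin n,
        (Matrix.adjugate (Matrix.of fun j k => a j k z)) p ℓ *
          fderiv ℂ (a ℓ ν) z (Pi.single p 1) =
      fderiv ℂ (fun w => (Matrix.of fun j k => a j k w).det) z (Pi.single ν 1) :=
  new_procedure_eq_gradient_det_of_rows_gradients_general n U g hg a ha z hz ν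
end

section
/- Let U be an open subset of ℂ² and let a_{11}, a_{12}, a_{21}, a_{22} be functions holomorphic on U. Define b_j = a_{22}·∂₁a_{1j} − a_{12}·∂₁a_{2j} − a_{21}·∂₂a_{1j} + a_{11}·∂₂a_{2j} for j = 1,2, and det a = a_{11}a_{22} − a_{12}a_{21}. Then for all functions φ₁, φ₂ on U, at every point of U: (b₁φ₁ + b₂φ₂) − (∂₁(det a)·φ₁ + ∂₂(det a)·φ₂) = (∂₂a_{21} − ∂₁a_{22})·(a_{11}φ₁ + a_{12}φ₂) + (∂₁a_{12} − ∂₂a_{11})·(a_{21}φ₁ + a_{22}φ₂). In particular, the difference between the vector produced by the new procedure and the gradient of the determinant is a linear combination, with holomorphic coefficients, of the two row dot products a_{j1}φ₁ + a_{j2}φ₂ (j = 1,2). -/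
theorem fderiv_mul_sub_mul_apply {𝕜 E : Type*} [NontriviallyNormedField 𝕜]
    [NormedAddCommGroup E] [NormedSpace 𝕜 E] {a b c d : E → 𝕜} {x : E}
    (ha : DifferentiableAt 𝕜 a x) (hb : DifferentiableAt 𝕜 b x)
    (hc : DifferentiableAt 𝕜 c x) (hd : DifferentiableAt 𝕜 d x) (v : E) :
    fderiv 𝕜 (fun y => a y * d y - b y * c y) x v =
      a x * fderiv 𝕜 d x v + d x * fderiv 𝕜 a x v -
        (b x * fderiv 𝕜 c x v + c x * fderiv 𝕜 b x v) := by
  rw [fderiv_fun_sub (ha.fun_mul hd) (hb.fun_mul hc), fderiv_fun_mul ha hd,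
    fderiv_fun_mul hb hc]
  simp only [sub_apply, add_apply, smul_apply, smul_eq_mul]

/-- **The computation of §6.4 of the paper.**  For a `2×2` matrix of holomorphic
functions on an open `U ⊆ ℂ²`, the difference between the vector `(b₁,b₂)` produced
by the new procedure of Theorem (6.2) and the gradient of the determinant, dotted
with any test functions `(φ₁,φ₂)`, is a combination of the row dot products
`a_{j1}φ₁ + a_{j2}φ₂`; hence for 3-dimensional special domains the new procedure
gives no new vector multipliers. -/
theorem two_by_two_new_procedure_difference
    (U : Set (ℂ × ℂ)) (hU : IsOpen U)
    (a₁₁ a₁₂ a₂₁ a₂₂ : ℂ × ℂ → ℂ)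
    (ha₁₁ : DifferentiableOn ℂ a₁₁ U) (ha₁₂ : DifferentiableOn ℂ a₁₂ U)
    (ha₂₁ : DifferentiableOn ℂ a₂₁ U) (ha₂₂ : DifferentiableOn ℂ a₂₂ U)
    (b₁ b₂ deta : ℂ × ℂ → ℂ)
    (hb₁ : b₁ = fun z => a₂₂ z * fderiv ℂ a₁₁ z (1, 0) - a₁₂ z * fderiv ℂ a₂₁ z (1, 0)
        - a₂₁ z * fderiv ℂ a₁₁ z (0, 1) + a₁₁ z * fderiv ℂ a₂₁ z (0, 1))
    (hb₂ : b₂ = fun z => a₂₂ z * fderiv ℂ a₁₂ z (1, 0) - a₁₂ z * fderiv ℂ a₂₂ z (1, 0)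
        - a₂₁ z * fderiv ℂ a₁₂ z (0, 1) + a₁₁ z * fderiv ℂ a₂₂ z (0, 1))
    (hdet : deta = fun z => a₁₁ z * a₂₂ z - a₁₂ z * a₂₁ z)
    (φ₁ φ₂ : ℂ × ℂ → ℂ) (z : ℂ × ℂ) (hz : z ∈ U) :
    (b₁ z * φ₁ z + b₂ z * φ₂ z) -
        (fderiv ℂ deta z (1, 0) * φ₁ z + fderiv ℂ deta z (0, 1) * φ₂ z) =
      (fderiv ℂ a₂₁ z (0, 1) - fderiv ℂ a₂₂ z (1, 0)) * (a₁₁ z * φ₁ z + a₁₂ z * φ₂ z) +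
        (fderiv ℂ a₁₂ z (1, 0) - fderiv ℂ a₁₁ z (0, 1)) * (a₂₁ z * φ₁ z + a₂₂ z * φ₂ z) := by
  have hUz := hU.mem_nhds hz
  have hdet_apply := fderiv_mul_sub_mul_apply (ha₁₁.differentiableAt hUz)
    (ha₁₂.differentiableAt hUz) (ha₂₁.differentiableAt hUz) (ha₂₂.differentiableAt hUz)
  subst hb₁ hb₂ hdet
  rw [hdet_apply, hdet_apply]
  ring
end
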